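/- (Proposition 1) Let G_k=(V,E,k) be a strongly connected labeled simple digraph and G_ℰ=(V,ℰ) an auxiliary digraph (a directed tree on V). Then there exists a unique matrix 𝒜_{k,ℰ} ∈ ℝ^{ℰ×ℰ} (the core matrix of the graph Laplacian) such that A_k diag(K_k) = −I_ℰ 𝒜_{k,ℰ} I_ℰ^T, and this matrix 𝒜_{k,ℰ} is invertible. -/

import Mathlib

open Matrix BigOperators Finset

variable {V : Type*}

/-- Directed reachability in the digraph with edge set `F`. -/
def dReach (F : Finset (V × V)) : V → V → Prop :=
  Relation.ReflTransGen fun a b => (a, b) ∈ F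

/-- Reachability in the underlying undirected graph of the digraph with edge set `F`. -/
def uReach (F : Finset (V × V)) : V → V → Prop :=
  Relation.ReflTransGen fun a b => (a, b) ∈ F ∨ (b, a) ∈ F

/-- A digraph is strongly connected if every vertex reaches every other vertex. -/
def StronglyConnected (F : Finset (V × V)) : Prop :=
  ∀ i j : V, dReach F i j

/-- A simple digraph has no self-loops. -/
def NoSelfLoops (F : Finset (V × V)) : Prop :=
  ∀ e ∈ F, e.1 ≠ e.2

/-- The edge set `F` contains a directed cycle. -/
def HasDirectedCycle (F : Finset (V × V)) : Prop :=
  ∃ v : V, Relation.TransGen (fun a b => (a, b) ∈ F) v v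

/-- The Laplacian matrix `A_k` of the labeled digraph `(V, F, k)`:
`(A_k)_{i,j} = k_{j→i}` if `(j→i) ∈ F`, `(A_k)_{i,i} = -∑_{(i→j)∈F} k_{i→j}`, and `0` otherwise. -/
noncomputable def digraphLaplacian [Fintype V] [DecidableEq V]
    (F : Finset (V × V)) (k : V × V → ℝ) : Matrix V V ℝ :=
  Matrix.of fun i j =>
    if i = j then -(∑ e ∈ F.filter (fun e => e.1 = i), k e)
    else if (j, i) ∈ F then k (j, i) else 0

/-- `T` is a directed spanning tree of the strongly connected digraph `E`, rooted at `i`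
and directed towards the root: no directed cycle, and every vertex except `i`
is the source of exactly one edge. -/
def IsSpanningTreeTo [DecidableEq V] (E : Finset (V × V)) (i : V)
    (T : Finset (V × V)) : Prop :=
  T ⊆ E ∧ ¬ HasDirectedCycle T ∧
    ∀ j : V, j ≠ i → (T.filter (fun e => e.1 = j)).card = 1

open scoped Classical in
/-- The tree constant `(K_k)_i = ∑_{T ∈ T_i} ∏_{(j→j')∈T} k_{j→j'}`. -/
noncomputable def treeConst [Fintype V] [DecidableEq V]
    (E : Finset (V × V)) (k : V × V → ℝ) (i : V) : ℝ :=
  ∑ T ∈ E.powerset.filter (fun T => IsSpanningTreeTo E i T), ∏ e ∈ T, k e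

/-- The incidence matrix of the digraph with edge set `F`: in the column of edge `(j→j')`,
entry `-1` in row `j`, entry `+1` in row `j'`, and `0` elsewhere. -/
noncomputable def incidence [DecidableEq V] (F : Finset (V × V)) :
    Matrix V {e : V × V // e ∈ F} ℝ :=
  Matrix.of fun i e =>
    (if (e : V × V).2 = i then (1 : ℝ) else 0) - (if (e : V × V).1 = i then (1 : ℝ) else 0)

/-- An auxiliary digraph on the vertex set `V` is a directed tree: it has `|V| - 1` edges
and its underlying undirected graph is connected. -/
def IsDirectedTree {V : Type*} [Fintype V] (F : Finset (V × V)) : Prop :=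
  F.card = Fintype.card V - 1 ∧ ∀ i j : V, uReach F i j

/-!
The column sums of `A_k` vanish, and by the Markov chain tree theorem so do the row sums of
`M = A_k diag(K_k)`: both `(∑_{i→j} k_{i→j}) K_i` and `∑_{j→i} k_{j→i} K_j` are the total weight of
the functional subgraphs of `E` whose unique cycle passes through `i`, obtained by adding the edge
out of `i` to a tree rooted at `i`, resp. the edge `j → i` closing the cycle to a tree rooted at
`j`. Hence the rows and columns of `M` lie in `{x | ∑ x = 0}`, which is the range of `I_ℰ` since
`ℰ` is connected; having `|V| - 1` edges, `I_ℰ` is moreover injective, and with a left inverse `J`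
of `I_ℰ` the matrix `𝒜 = -J M Jᵀ` is the unique solution. By the maximum principle `ker A_k` is
spanned by the positive vector `K_k`, so `ker M` is spanned by `1`, which `I_ℰᵀ` annihilates; this
makes `𝒜` injective.
-/

theorem Function.iterate_eq_iterate_minimalPeriod_pred {α : Type*} {f : α → α} {x : α} {n : ℕ}
    (h : f^[n + 1] x = x) : f^[n] x = f^[Function.minimalPeriod f x - 1] x := by
  have hper : Function.IsPeriodicPt f (n + 1) x := h
  obtain ⟨q, hq⟩ := hper.minimalPeriod_dvd
  have hp := hper.minimalPeriod_pos n.succ_pos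
  obtain ⟨q, rfl⟩ : ∃ q', q = q' + 1 := Nat.exists_eq_succ_of_ne_zero (by rintro rfl; simp at hq)
  have hn : n = Function.minimalPeriod f x - 1 + Function.minimalPeriod f x * q := by
    rw [Nat.mul_succ] at hq; omega
  rw [hn, Function.iterate_add_apply, ((Function.isPeriodicPt_minimalPeriod f x).mul_const q).eq]

theorem Finset.sum_prod_eq_mul_sum_prod_of_insert_erase {α R : Type*} [DecidableEq α]
    [CommSemiring R] {𝒮 𝒯 : Finset (Finset α)} {a : α} (f : α → R)
    (h𝒯 : ∀ T ∈ 𝒯, a ∉ T ∧ insert a T ∈ 𝒮) (h𝒮 : ∀ S ∈ 𝒮, a ∈ S ∧ S.erase a ∈ 𝒯) :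
    ∑ S ∈ 𝒮, ∏ x ∈ S, f x = f a * ∑ T ∈ 𝒯, ∏ x ∈ T, f x := by
  rw [Finset.mul_sum]
  refine Finset.sum_nbij' (Finset.erase · a) (insert a) (fun S hS => (h𝒮 S hS).2)
    (fun T hT => (h𝒯 T hT).2) (fun S hS => Finset.insert_erase (h𝒮 S hS).1)
    (fun T hT => Finset.erase_insert (h𝒯 T hT).1) fun S hS => ?_
  exact (Finset.mul_prod_erase S f (h𝒮 S hS).1).symm

theorem Relation.transGen_iterate_succ {α : Type*} {r : α → α → Prop} {f : α → α} {x : α} {t : ℕ}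
    (h : ∀ s ≤ t, r (f^[s] x) (f^[s + 1] x)) : Relation.TransGen r x (f^[t + 1] x) := by
  induction t with
  | zero => exact .single (h 0 le_rfl)
  | succ t ih => exact (ih fun s hs => h s (by omega)).tail (h (t + 1) le_rfl)

namespace Matrix

variable {K m n : Type*} [Field K] [Fintype m] [Fintype n]

theorem finrank_ker_mulVecLin_transpose (A : Matrix n n K) :
    Module.finrank K (LinearMap.ker Aᵀ.mulVecLin) =
      Module.finrank K (LinearMap.ker A.mulVecLin) := by
  have h := A.rank_transpose
  have h₁ := LinearMap.finrank_range_add_finrank_ker A.mulVecLin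
  have h₂ := LinearMap.finrank_range_add_finrank_ker Aᵀ.mulVecLin
  unfold Matrix.rank at h
  omega

variable [DecidableEq n]

theorem exists_mul_eq_one_of_injective_mulVec [DecidableEq m] {B : Matrix m n K}
    (hB : Function.Injective B.mulVec) : ∃ J : Matrix n m K, J * B = 1 := by
  obtain ⟨g, hg⟩ := B.mulVecLin.exists_leftInverse_of_injective (LinearMap.ker_eq_bot.mpr hB)
  refine ⟨LinearMap.toMatrix' g, toLin'.injective ?_⟩
  rw [toLin'_mul, toLin'_toMatrix', toLin'_one, toLin'_apply', hg]

variable {B : Matrix m n K} {J : Matrix n m K}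

theorem mul_mul_mul_transpose_mul_transpose (hJ : J * B = 1) (A : Matrix n n K) :
    J * (B * A * Bᵀ) * Jᵀ = A := by
  rw [show J * (B * A * Bᵀ) * Jᵀ = J * B * A * (J * B)ᵀ by simp only [transpose_mul,
    Matrix.mul_assoc], hJ, transpose_one, Matrix.one_mul, Matrix.mul_one]

theorem mul_mul_eq_of_range_le (hJ : J * B = 1) {M : Matrix m m K}
    (hM : LinearMap.range M.mulVecLin ≤ LinearMap.range B.mulVecLin) : B * (J * M) = M := by
  refine ext_iff_mulVec.mpr fun v => ?_
  obtain ⟨u, hu⟩ : ∃ u, B *ᵥ u = M *ᵥ v := hM ⟨v, rfl⟩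
  rw [← mulVec_mulVec, ← mulVec_mulVec, ← hu, mulVec_mulVec u J B, hJ, one_mulVec]

theorem existsUnique_eq_mul_mul_transpose [DecidableEq m] (hB : Function.Injective B.mulVec)
    {M : Matrix m m K}
    (hM : LinearMap.range M.mulVecLin ≤ LinearMap.range B.mulVecLin)
    (hMt : LinearMap.range Mᵀ.mulVecLin ≤ LinearMap.range B.mulVecLin) :
    ∃! A : Matrix n n K, M = B * A * Bᵀ := by
  obtain ⟨J, hJ⟩ := exists_mul_eq_one_of_injective_mulVec hB
  refine ⟨J * M * Jᵀ, ?_, fun A hA => by rw [hA, mul_mul_mul_transpose_mul_transpose hJ]⟩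
  have hMt' : M * Jᵀ * Bᵀ = M := by
    simpa [transpose_mul, Matrix.mul_assoc] using congrArg transpose (mul_mul_eq_of_range_le hJ hMt)
  show M = B * (J * M * Jᵀ) * Bᵀ
  conv_lhs => rw [← hMt', ← mul_mul_eq_of_range_le hJ hM]
  simp only [Matrix.mul_assoc]

theorem isUnit_of_eq_mul_mul_transpose [DecidableEq m] (hB : Function.Injective B.mulVec)
    {M : Matrix m m K}
    (hker : LinearMap.ker M.mulVecLin ≤ LinearMap.ker Bᵀ.mulVecLin) {A : Matrix n n K}
    (hA : M = B * A * Bᵀ) : IsUnit A := by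
  obtain ⟨J, hJ⟩ := exists_mul_eq_one_of_injective_mulVec hB
  refine mulVec_injective_iff_isUnit.mp ((injective_iff_map_eq_zero' (mulVecLin A)).mpr ?_)
  intro v
  refine ⟨fun hv => ?_, fun hv => by rw [hv, mulVecLin_apply, mulVec_zero]⟩
  have hBJ : Bᵀ *ᵥ (Jᵀ *ᵥ v) = v := by
    rw [mulVec_mulVec, ← transpose_mul, hJ, transpose_one, one_mulVec]
  have hker' : Jᵀ *ᵥ v ∈ LinearMap.ker M.mulVecLin := by
    rw [LinearMap.mem_ker, mulVecLin_apply, hA, ← mulVec_mulVec, ← mulVec_mulVec, hBJ]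
    rw [mulVecLin_apply] at hv
    rw [hv, mulVec_zero]
  rw [← hBJ]
  exact hker hker'

end Matrix

theorem hasDirectedCycle_of_forall_iterate_mem [Finite V] {S : Finset (V × V)} {f : V → V}
    {v : V} (h : ∀ s, (f^[s] v, f^[s + 1] v) ∈ S) : HasDirectedCycle S := by
  obtain ⟨a, b, hab, heq⟩ := Finite.exists_ne_map_eq_of_infinite (fun t : ℕ => f^[t] v)
  wlog hlt : a < b generalizing a b
  · exact this b a hab.symm heq.symm (by omega)
  obtain ⟨p, rfl⟩ := Nat.exists_eq_add_of_lt hlt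
  refine ⟨f^[a] v, ?_⟩
  have hcyc : Relation.TransGen (fun x y => (x, y) ∈ S) (f^[a] v) (f^[p + 1] (f^[a] v)) :=
    Relation.transGen_iterate_succ fun s _ => by
      simpa only [← Function.iterate_add_apply, Nat.add_right_comm s 1 a] using h (s + a)
  rwa [← Function.iterate_add_apply, show p + 1 + a = a + p + 1 by omega, ← heq] at hcyc

theorem exists_iterate_eq_of_not_hasDirectedCycle [Finite V] {S : Finset (V × V)} {f : V → V}
    {r : V} (hf : ∀ v ≠ r, (v, f v) ∈ S) (hS : ¬HasDirectedCycle S) (v : V) :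
    ∃ t, f^[t] v = r := by
  by_contra! h
  exact hS (hasDirectedCycle_of_forall_iterate_mem fun s => by
    rw [Function.iterate_succ_apply']; exact hf _ (h s))

theorem dReach_of_iterate_eq {S : Finset (V × V)} {f : V → V} {r : V}
    (hf : ∀ v ≠ r, (v, f v) ∈ S) {t : ℕ} {v : V} (h : f^[t] v = r) : dReach S v r := by
  induction t generalizing v with
  | zero => exact h ▸ .refl
  | succ t ih =>
    by_cases hv : v = r
    · exact hv ▸ .refl
    · exact .head (hf v hv) (ih h)

theorem exists_iterate_eq_of_reflTransGen {S : Finset (V × V)} {f : V → V}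
    (hf : ∀ v w, (v, w) ∈ S → f v = w) {x y : V}
    (h : Relation.ReflTransGen (fun a b => (a, b) ∈ S) x y) : ∃ t, f^[t] x = y := by
  induction h with
  | refl => exact ⟨0, rfl⟩
  | tail _ hzw ih =>
    obtain ⟨t, rfl⟩ := ih
    exact ⟨t + 1, by rw [Function.iterate_succ_apply', hf _ _ hzw]⟩

theorem not_hasDirectedCycle_of_dReach {T : Finset (V × V)} {r : V}
    (hfun : ∀ a b c, (a, b) ∈ T → (a, c) ∈ T → b = c) (hr : ∀ b, (r, b) ∉ T)
    (hreach : ∀ v, dReach T v r) : ¬HasDirectedCycle T := by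
  rintro ⟨v, hv⟩
  induction hreach v using Relation.ReflTransGen.head_induction_on with
  | refl =>
    obtain ⟨b, hb, -⟩ := Relation.TransGen.head'_iff.mp hv
    exact hr b hb
  | head hac _ ih =>
    obtain ⟨u, hu, hua⟩ := Relation.TransGen.head'_iff.mp hv
    obtain rfl := hfun _ _ _ hu hac
    rcases Relation.ReflTransGen.cases_head hua with rfl | ⟨w, hw, hwa⟩
    · exact ih hv
    · exact ih (.head' hw (hwa.tail hac))

section Successor

open Classical in
noncomputable def succOf (S : Finset (V × V)) (v : V) : V :=
  if h : ∃ w, (v, w) ∈ S then h.choose else v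

theorem mk_succOf_mem_of_mem {S : Finset (V × V)} {v w : V} (h : (v, w) ∈ S) :
    (v, succOf S v) ∈ S := by
  have h' : ∃ w, (v, w) ∈ S := ⟨w, h⟩
  rw [succOf, dif_pos h']
  exact h'.choose_spec

/-- The vertex preceding `i` on the cycle of a functional graph through `i`. -/
noncomputable def cyclePred (S : Finset (V × V)) (i : V) : V :=
  (succOf S)^[Function.minimalPeriod (succOf S) i - 1] i

theorem cyclePred_eq_of_iterate_eq {S : Finset (V × V)} {i j : V} {t : ℕ}
    (ht : (succOf S)^[t] i = j) (hj : succOf S j = i) : cyclePred S i = j := by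
  rw [← ht]
  exact (Function.iterate_eq_iterate_minimalPeriod_pred
    (by rw [Function.iterate_succ_apply', ht, hj])).symm

variable [DecidableEq V]

theorem eq_of_card_filter_fst_eq_one {S : Finset (V × V)} {v b c : V}
    (h : (S.filter fun e => e.1 = v).card = 1) (hb : (v, b) ∈ S) (hc : (v, c) ∈ S) : b = c :=
  congrArg Prod.snd <| Finset.card_le_one.mp h.le (v, b) (by simp [hb]) (v, c) (by simp [hc])

theorem exists_mem_of_card_filter_fst_eq_one {S : Finset (V × V)} {v : V}
    (h : (S.filter fun e => e.1 = v).card = 1) : ∃ w, (v, w) ∈ S := by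
  obtain ⟨⟨a, w⟩, he⟩ := Finset.card_pos.mp (h.symm ▸ Nat.one_pos)
  rw [Finset.mem_filter] at he
  exact ⟨w, he.2 ▸ he.1⟩

theorem mem_iff_succOf_eq {S : Finset (V × V)} {v w : V}
    (h : (S.filter fun e => e.1 = v).card = 1) : (v, w) ∈ S ↔ succOf S v = w := by
  obtain ⟨w', hw'⟩ := exists_mem_of_card_filter_fst_eq_one h
  exact ⟨fun hw => eq_of_card_filter_fst_eq_one h (mk_succOf_mem_of_mem hw) hw,
    fun hw => hw ▸ mk_succOf_mem_of_mem hw'⟩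

theorem card_filter_fst_insert_eq_one {S : Finset (V × V)} {e : V × V}
    (he : ∀ b, (e.1, b) ∉ S) (hS : ∀ v ≠ e.1, (S.filter fun e => e.1 = v).card = 1) (v : V) :
    ((insert e S).filter fun e => e.1 = v).card = 1 := by
  rw [Finset.filter_insert]
  split_ifs with hv
  · rw [Finset.filter_false_of_mem fun x hx hxv => he x.2 (by rw [hv, ← hxv]; exact hx)]
    rfl
  · exact hS v (Ne.symm hv)

theorem card_filter_fst_erase_eq_one {S : Finset (V × V)} {e : V × V}
    (hS : ∀ v, (S.filter fun e => e.1 = v).card = 1) {v : V} (hv : v ≠ e.1) :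
    ((S.erase e).filter fun e => e.1 = v).card = 1 := by
  rw [Finset.filter_erase, Finset.erase_eq_of_notMem (by simp [Ne.symm hv]), hS]

end Successor

section SpanningTrees

variable [DecidableEq V] {E T : Finset (V × V)} {r : V}

theorem IsSpanningTreeTo.mk_succOf_mem (hT : IsSpanningTreeTo E r T) {v : V} (hv : v ≠ r) :
    (v, succOf T v) ∈ T :=
  mk_succOf_mem_of_mem (exists_mem_of_card_filter_fst_eq_one (hT.2.2 v hv)).choose_spec

theorem IsSpanningTreeTo.root_not_mem [Finite V] (hT : IsSpanningTreeTo E r T) (b : V) :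
    (r, b) ∉ T := by
  intro hb
  have hf : ∀ v, (v, succOf T v) ∈ T := fun v =>
    if hv : v = r then hv ▸ mk_succOf_mem_of_mem hb else hT.mk_succOf_mem hv
  exact hT.2.1 (hasDirectedCycle_of_forall_iterate_mem (v := r) fun s => by
    rw [Function.iterate_succ_apply']; exact hf _)

theorem IsSpanningTreeTo.dReach [Finite V] (hT : IsSpanningTreeTo E r T) (v : V) :
    dReach T v r :=
  have hf : ∀ v ≠ r, (v, succOf T v) ∈ T := fun _ => hT.mk_succOf_mem
  dReach_of_iterate_eq hf (exists_iterate_eq_of_not_hasDirectedCycle hf hT.2.1 v).choose_spec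

theorem IsSpanningTreeTo.card_filter_fst_insert [Finite V] (hT : IsSpanningTreeTo E r T)
    {e : V × V} (he : e.1 = r) (v : V) : ((insert e T).filter fun e => e.1 = v).card = 1 :=
  card_filter_fst_insert_eq_one (he ▸ hT.root_not_mem) (he ▸ hT.2.2) v

/-- `T` is a spanning tree of `C` directed towards `i`, and no edge of `T` leaves a vertex
outside `C`. -/
def IsSpanningTreeOn (E : Finset (V × V)) (i : V) (C : Finset V) (T : Finset (V × V)) : Prop :=
  i ∈ C ∧ T ⊆ E ∧ (∀ j, (T.filter fun e => e.1 = j).card = if j ∈ C.erase i then 1 else 0) ∧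
    ∀ j ∈ C, dReach T j i

theorem isSpanningTreeOn_singleton (E : Finset (V × V)) (i : V) :
    IsSpanningTreeOn E i {i} ∅ :=
  ⟨Finset.mem_singleton_self i, Finset.empty_subset E, by simp,
    fun j hj => Finset.mem_singleton.mp hj ▸ .refl⟩

theorem IsSpanningTreeOn.extend {i a b : V} {C : Finset V} (hT : IsSpanningTreeOn E i C T)
    (hab : (a, b) ∈ E) (ha : a ∉ C) (hb : b ∈ C) :
    IsSpanningTreeOn E i (insert a C) (insert (a, b) T) := by
  obtain ⟨hi, hTE, hdeg, hreach⟩ := hT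
  have hai : a ≠ i := fun h => ha (h ▸ hi)
  have hTa : (T.filter fun e => e.1 = a) = ∅ :=
    Finset.card_eq_zero.mp (by rw [hdeg a, if_neg (by simp [ha])])
  have hmono : ∀ j, dReach T j i → dReach (insert (a, b) T) j i :=
    fun j => Relation.ReflTransGen.mono (fun _ _ => Finset.mem_insert_of_mem) j i
  refine ⟨Finset.mem_insert_of_mem hi, Finset.insert_subset hab hTE, fun j => ?_, ?_⟩
  · rw [Finset.filter_insert]
    split_ifs with hj hj' hj'
    · subst hj
      rw [hTa]
      rfl
    · exact absurd (by simp [← hj, hai]) hj'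
    · rw [hdeg j, if_pos ?_]
      simpa [Ne.symm hj] using hj'
    · rw [hdeg j, if_neg ?_]
      simpa [Ne.symm hj] using hj'
  · intro j hj
    rcases Finset.mem_insert.mp hj with rfl | hj
    · exact .head (Finset.mem_insert_self _ _) (hmono b (hreach b hb))
    · exact hmono j (hreach j hj)

theorem IsSpanningTreeOn.isSpanningTreeTo [Fintype V] {i : V}
    (hT : IsSpanningTreeOn E i Finset.univ T) : IsSpanningTreeTo E i T := by
  obtain ⟨-, hTE, hdeg, hreach⟩ := hT
  have hle : ∀ j, (T.filter fun e => e.1 = j).card ≤ 1 := fun j => by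
    rw [hdeg j]; split_ifs <;> simp
  refine ⟨hTE, not_hasDirectedCycle_of_dReach ?_ ?_ fun v => hreach v (Finset.mem_univ v), ?_⟩
  · intro a b c hb hc
    exact congrArg Prod.snd <|
      Finset.card_le_one.mp (hle a) (a, b) (by simp [hb]) (a, c) (by simp [hc])
  · intro b hb
    have := hdeg i
    rw [if_neg (by simp), Finset.card_eq_zero] at this
    exact Finset.notMem_empty (i, b) (this ▸ Finset.mem_filter.mpr ⟨hb, rfl⟩)
  · intro j hj
    rw [hdeg j, if_pos (by simp [hj])]

theorem exists_edge_not_mem_mem_of_dReach {v w : V} (h : dReach E v w) {C : Finset V}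
    (hv : v ∉ C) (hw : w ∈ C) : ∃ a b, (a, b) ∈ E ∧ a ∉ C ∧ b ∈ C := by
  induction h using Relation.ReflTransGen.head_induction_on with
  | refl => exact absurd hw hv
  | @head a c hac _ ih =>
    by_cases hc : c ∈ C
    · exact ⟨a, c, hac, hv, hc⟩
    · exact ih hc

theorem StronglyConnected.exists_isSpanningTreeTo [Fintype V] (hsc : StronglyConnected E)
    (i : V) : ∃ T, IsSpanningTreeTo E i T := by
  classical
  obtain ⟨C, hC, hmax⟩ := Finset.exists_max_image
    (Finset.univ.filter fun C => ∃ T, IsSpanningTreeOn E i C T) Finset.card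
    ⟨{i}, Finset.mem_filter.mpr ⟨Finset.mem_univ _, ∅, isSpanningTreeOn_singleton E i⟩⟩
  obtain ⟨T, hT⟩ := (Finset.mem_filter.mp hC).2
  by_cases hCu : C = Finset.univ
  · exact ⟨T, hCu ▸ hT |>.isSpanningTreeTo⟩
  obtain ⟨v, hv⟩ : ∃ v, v ∉ C := by simpa [Finset.eq_univ_iff_forall] using hCu
  obtain ⟨a, b, hab, ha, hb⟩ := exists_edge_not_mem_mem_of_dReach (hsc v i) hv hT.1
  have := hmax (insert a C) (Finset.mem_filter.mpr ⟨Finset.mem_univ _, _, hT.extend hab ha hb⟩)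
  rw [Finset.card_insert_of_notMem ha] at this
  omega

open scoped Classical in
noncomputable def spanningTrees (E : Finset (V × V)) (i : V) : Finset (Finset (V × V)) :=
  E.powerset.filter (IsSpanningTreeTo E i)

theorem treeConst_eq_sum [Fintype V] (E : Finset (V × V)) (k : V × V → ℝ) (i : V) :
    treeConst E k i = ∑ T ∈ spanningTrees E i, ∏ e ∈ T, k e :=
  rfl

theorem mem_spanningTrees {i : V} : T ∈ spanningTrees E i ↔ IsSpanningTreeTo E i T := by
  simpa [spanningTrees] using fun h : IsSpanningTreeTo E i T => h.1

theorem treeConst_pos [Fintype V] {k : V × V → ℝ} (hk : ∀ e ∈ E, 0 < k e)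
    (hsc : StronglyConnected E) (i : V) : 0 < treeConst E k i := by
  obtain ⟨T, hT⟩ := hsc.exists_isSpanningTreeTo i
  exact Finset.sum_pos
    (fun T hT => Finset.prod_pos fun e he => hk e ((mem_spanningTrees.mp hT).1 he))
    ⟨T, mem_spanningTrees.mpr hT⟩

end SpanningTrees

section Unicycles

variable [DecidableEq V] {E S T : Finset (V × V)}

/-- Functional subgraphs of `E` whose only cycle passes through `i`. -/
def IsUnicycleThrough (E : Finset (V × V)) (i : V) (S : Finset (V × V)) : Prop :=
  S ⊆ E ∧ (∀ v, (S.filter fun e => e.1 = v).card = 1) ∧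
    ¬HasDirectedCycle (S.filter fun e => e.1 ≠ i)

open scoped Classical in
noncomputable def unicyclesThrough (E : Finset (V × V)) (i : V) : Finset (Finset (V × V)) :=
  E.powerset.filter (IsUnicycleThrough E i)

theorem mem_unicyclesThrough {i : V} : S ∈ unicyclesThrough E i ↔ IsUnicycleThrough E i S := by
  simpa [unicyclesThrough] using fun h : IsUnicycleThrough E i S => h.1

namespace IsUnicycleThrough

variable {i : V} (hS : IsUnicycleThrough E i S)
include hS

theorem mem_iff {v w : V} : (v, w) ∈ S ↔ succOf S v = w :=
  mem_iff_succOf_eq (hS.2.1 v)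

theorem exists_iterate_eq [Finite V] (v : V) : ∃ t, (succOf S)^[t] v = i :=
  exists_iterate_eq_of_not_hasDirectedCycle
    (fun _ hw => Finset.mem_filter.mpr ⟨hS.mem_iff.mpr rfl, hw⟩) hS.2.2 v

theorem succOf_cyclePred [Finite V] : succOf S (cyclePred S i) = i := by
  obtain ⟨t, ht⟩ := hS.exists_iterate_eq (succOf S i)
  have hp := Function.IsPeriodicPt.minimalPeriod_pos t.succ_pos
    (show Function.IsPeriodicPt (succOf S) (t + 1) i from ht)
  rw [cyclePred, ← Function.iterate_succ_apply' (succOf S), Nat.succ_eq_add_one,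
    Nat.sub_add_cancel hp, Function.iterate_minimalPeriod]

theorem erase_isSpanningTreeTo : IsSpanningTreeTo E i (S.erase (i, succOf S i)) := by
  have herase : S.erase (i, succOf S i) = S.filter fun e => e.1 ≠ i := by
    ext ⟨a, b⟩
    simp only [Finset.mem_erase, Finset.mem_filter, ne_eq, Prod.mk.injEq]
    constructor
    · rintro ⟨hne, hab⟩
      exact ⟨hab, fun ha => hne ⟨ha, ha ▸ (hS.mem_iff.mp hab).symm⟩⟩
    · rintro ⟨hab, ha⟩
      exact ⟨fun h => ha h.1, hab⟩
  refine ⟨(Finset.erase_subset _ _).trans hS.1, herase ▸ hS.2.2, fun v hv => ?_⟩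
  exact card_filter_fst_erase_eq_one hS.2.1 hv

theorem erase_cyclePred_isSpanningTreeTo [Finite V] :
    IsSpanningTreeTo E (cyclePred S i) (S.erase (cyclePred S i, i)) := by
  set j := cyclePred S i
  set R := S.erase (j, i)
  have hf : ∀ v ≠ j, (v, succOf S v) ∈ R := fun v hv =>
    Finset.mem_erase.mpr ⟨fun h => hv (congrArg Prod.fst h), hS.mem_iff.mpr rfl⟩
  have hreach : ∀ v, ∃ t, (succOf S)^[t] v = j := fun v => by
    obtain ⟨t, ht⟩ := hS.exists_iterate_eq v
    exact ⟨Function.minimalPeriod (succOf S) i - 1 + t, by rw [Function.iterate_add_apply, ht]; rfl⟩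
  have hroot : ∀ b, (j, b) ∉ R := fun b hb => by
    obtain ⟨hne, hb⟩ := Finset.mem_erase.mp hb
    exact hne (by rw [(hS.mem_iff.mp hb).symm.trans hS.succOf_cyclePred])
  refine ⟨(Finset.erase_subset _ _).trans hS.1, ?_,
    fun v hv => card_filter_fst_erase_eq_one hS.2.1 hv⟩
  refine not_hasDirectedCycle_of_dReach (fun a b c hb hc => ?_) hroot
    fun v => dReach_of_iterate_eq hf (hreach v).choose_spec
  exact (hS.mem_iff.mp (Finset.mem_of_mem_erase hb)).symm.trans
    (hS.mem_iff.mp (Finset.mem_of_mem_erase hc))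

end IsUnicycleThrough

namespace IsSpanningTreeTo

variable [Finite V] {i : V} {e : V × V}

theorem insert_isUnicycleThrough_root (hT : IsSpanningTreeTo E i T) (he : e ∈ E) (hei : e.1 = i) :
    IsUnicycleThrough E i (insert e T) := by
  refine ⟨Finset.insert_subset he hT.1, hT.card_filter_fst_insert hei, ?_⟩
  rw [Finset.filter_insert, if_neg (not_not.mpr hei), Finset.filter_true_of_mem fun x hx =>
    show x.1 ≠ i from fun hxi => hT.root_not_mem x.2 (by rw [← hxi]; exact hx)]
  exact hT.2.1

theorem insert_isUnicycleThrough {j : V} (hT : IsSpanningTreeTo E j T) (he : (j, i) ∈ E) :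
    IsUnicycleThrough E i (insert (j, i) T) ∧ cyclePred (insert (j, i) T) i = j := by
  set S := insert (j, i) T
  have hdeg := hT.card_filter_fst_insert (e := (j, i)) rfl
  have hmem : ∀ {v w}, (v, w) ∈ S ↔ succOf S v = w := mem_iff_succOf_eq (hdeg _)
  have hj : succOf S j = i := hmem.mp (Finset.mem_insert_self _ _)
  have hto_j : ∀ v, ∃ t, (succOf S)^[t] v = j := fun v =>
    exists_iterate_eq_of_reflTransGen (fun _ _ h => hmem.mp (Finset.mem_insert_of_mem h))
      (hT.dReach v)
  obtain ⟨t, ht⟩ := hto_j i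
  refine ⟨⟨Finset.insert_subset he hT.1, hdeg, ?_⟩, cyclePred_eq_of_iterate_eq ht hj⟩
  refine not_hasDirectedCycle_of_dReach (r := i) ?_ (fun b hb => (Finset.mem_filter.mp hb).2 rfl)
    fun v => ?_
  · intro a b c hb hc
    exact (hmem.mp (Finset.filter_subset _ _ hb)).symm.trans
      (hmem.mp (Finset.filter_subset _ _ hc))
  · obtain ⟨t, ht⟩ := hto_j v
    exact dReach_of_iterate_eq (t := t + 1)
      (fun v hv => Finset.mem_filter.mpr ⟨hmem.mpr rfl, hv⟩)
      (by rw [Function.iterate_succ_apply', ht, hj])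

end IsSpanningTreeTo

end Unicycles

section MarkovChainTree

variable [Fintype V] [DecidableEq V]

theorem sum_out_mul_treeConst (E : Finset (V × V)) (k : V × V → ℝ) (i : V) :
    ∑ e ∈ E.filter (fun e => e.1 = i), k e * treeConst E k i
      = ∑ S ∈ unicyclesThrough E i, ∏ e ∈ S, k e := by
  rw [← Finset.sum_fiberwise_of_maps_to (g := fun S => (i, succOf S i)) fun S hS => ?_]
  · refine Finset.sum_congr rfl fun e he => ?_
    obtain ⟨heE, hei⟩ := Finset.mem_filter.mp he
    obtain ⟨i', w⟩ := e
    obtain rfl : i' = i := hei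
    rw [treeConst_eq_sum]
    refine (Finset.sum_prod_eq_mul_sum_prod_of_insert_erase k (fun T hT => ?_) fun S hS => ?_).symm
    · have hT := mem_spanningTrees.mp hT
      have hU := hT.insert_isUnicycleThrough_root heE rfl
      refine ⟨hT.root_not_mem w, Finset.mem_filter.mpr ⟨mem_unicyclesThrough.mpr hU, ?_⟩⟩
      rw [hU.mem_iff.mp (Finset.mem_insert_self _ _)]
    · obtain ⟨hSU, hSw⟩ := Finset.mem_filter.mp hS
      have hS := mem_unicyclesThrough.mp hSU
      rw [← hSw]
      exact ⟨hS.mem_iff.mpr rfl, mem_spanningTrees.mpr hS.erase_isSpanningTreeTo⟩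
  · have hS := mem_unicyclesThrough.mp hS
    exact Finset.mem_filter.mpr ⟨hS.1 (hS.mem_iff.mpr rfl), rfl⟩

theorem sum_in_mul_treeConst (E : Finset (V × V)) (k : V × V → ℝ) (i : V) :
    ∑ e ∈ E.filter (fun e => e.2 = i), k e * treeConst E k e.1
      = ∑ S ∈ unicyclesThrough E i, ∏ e ∈ S, k e := by
  rw [← Finset.sum_fiberwise_of_maps_to (g := fun S => (cyclePred S i, i)) fun S hS => ?_]
  · refine Finset.sum_congr rfl fun e he => ?_
    obtain ⟨heE, hei⟩ := Finset.mem_filter.mp he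
    obtain ⟨j, i'⟩ := e
    obtain rfl : i' = i := hei
    rw [treeConst_eq_sum]
    refine (Finset.sum_prod_eq_mul_sum_prod_of_insert_erase k (fun T hT => ?_) fun S hS => ?_).symm
    · have hT := mem_spanningTrees.mp hT
      obtain ⟨hU, hpred⟩ := hT.insert_isUnicycleThrough heE
      exact ⟨hT.root_not_mem _, Finset.mem_filter.mpr ⟨mem_unicyclesThrough.mpr hU, by rw [hpred]⟩⟩
    · obtain ⟨hSU, hpred⟩ := Finset.mem_filter.mp hS
      obtain rfl : cyclePred S _ = j := congrArg Prod.fst hpred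
      have hU := mem_unicyclesThrough.mp hSU
      exact ⟨hU.mem_iff.mpr hU.succOf_cyclePred,
        mem_spanningTrees.mpr hU.erase_cyclePred_isSpanningTreeTo⟩
  · have hS := mem_unicyclesThrough.mp hS
    exact Finset.mem_filter.mpr ⟨hS.1 (hS.mem_iff.mpr hS.succOf_cyclePred), rfl⟩

end MarkovChainTree


section Laplacian

variable [Fintype V] [DecidableEq V] {E : Finset (V × V)} {k : V × V → ℝ}

theorem sum_filter_snd_eq_sum_ite {M : Type*} [AddCommMonoid M] (E : Finset (V × V)) (i : V)
    (g : V × V → M) :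
    ∑ e ∈ E.filter (fun e => e.2 = i), g e = ∑ j, if (j, i) ∈ E then g (j, i) else 0 := by
  rw [← Finset.sum_filter]
  refine Finset.sum_nbij' Prod.fst (·, i) ?_ (by simp) (by simp +contextual) (by simp)
    (by simp +contextual)
  rintro ⟨a, b⟩ h
  obtain ⟨h, rfl⟩ := Finset.mem_filter.mp h
  simpa using h

theorem sum_filter_fst_eq_sum_ite {M : Type*} [AddCommMonoid M] (E : Finset (V × V)) (i : V)
    (g : V × V → M) :
    ∑ e ∈ E.filter (fun e => e.1 = i), g e = ∑ j, if (i, j) ∈ E then g (i, j) else 0 := by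
  rw [← Finset.sum_filter]
  refine Finset.sum_nbij' Prod.snd (i, ·) ?_ (by simp) (by simp +contextual) (by simp)
    (by simp +contextual)
  rintro ⟨a, b⟩ h
  obtain ⟨h, rfl⟩ := Finset.mem_filter.mp h
  simpa using h

theorem digraphLaplacian_apply_of_noSelfLoops (hloop : NoSelfLoops E) (i j : V) :
    digraphLaplacian E k i j = (if (j, i) ∈ E then k (j, i) else 0) -
      if i = j then ∑ e ∈ E.filter (fun e => e.1 = i), k e else 0 := by
  by_cases h : i = j
  · subst h
    have hii : (i, i) ∉ E := fun h' => hloop _ h' rfl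
    simp [digraphLaplacian, hii]
  · simp [digraphLaplacian, h]

theorem digraphLaplacian_mulVec_apply (hloop : NoSelfLoops E) (y : V → ℝ) (i : V) :
    (digraphLaplacian E k *ᵥ y) i = ∑ e ∈ E.filter (fun e => e.2 = i), k e * y e.1 -
      (∑ e ∈ E.filter (fun e => e.1 = i), k e) * y i := by
  simp [mulVec, dotProduct, digraphLaplacian_apply_of_noSelfLoops hloop, sub_mul,
    Finset.sum_sub_distrib, ite_mul, sum_filter_snd_eq_sum_ite]

theorem vecMul_digraphLaplacian_apply (hloop : NoSelfLoops E) (x : V → ℝ) (j : V) :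
    (x ᵥ* digraphLaplacian E k) j = ∑ e ∈ E.filter (fun e => e.1 = j), k e * (x e.2 - x j) := by
  simp [vecMul, dotProduct, digraphLaplacian_apply_of_noSelfLoops hloop, mul_sub,
    Finset.sum_sub_distrib, mul_ite, sum_filter_fst_eq_sum_ite, Finset.mul_sum, mul_comm]

theorem digraphLaplacian_mulVec_treeConst (hloop : NoSelfLoops E) :
    digraphLaplacian E k *ᵥ treeConst E k = 0 := by
  funext i
  rw [digraphLaplacian_mulVec_apply hloop, Finset.sum_mul, sum_in_mul_treeConst,
    sum_out_mul_treeConst, sub_self, Pi.zero_apply]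

theorem one_vecMul_digraphLaplacian (hloop : NoSelfLoops E) : 1 ᵥ* digraphLaplacian E k = 0 := by
  funext j
  simp [vecMul_digraphLaplacian_apply hloop]

theorem StronglyConnected.eq_of_vecMul_digraphLaplacian_eq_zero (hsc : StronglyConnected E)
    (hloop : NoSelfLoops E) (hk : ∀ e ∈ E, 0 < k e) {x : V → ℝ}
    (hx : x ᵥ* digraphLaplacian E k = 0) (a b : V) : x a = x b := by
  obtain ⟨v, -, hmax⟩ := Finset.exists_max_image Finset.univ x ⟨a, Finset.mem_univ a⟩
  have hstep : ∀ j c, (j, c) ∈ E → x j = x v → x c = x v := by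
    intro j c hjc hj
    have hnonpos : ∀ e ∈ E.filter (fun e => e.1 = j), k e * (x e.2 - x j) ≤ 0 := fun e he =>
      mul_nonpos_of_nonneg_of_nonpos (hk e (Finset.mem_filter.mp he).1).le
        (by linarith [hmax e.2 (Finset.mem_univ _)])
    have hsum := congrFun hx j
    rw [vecMul_digraphLaplacian_apply hloop, Pi.zero_apply] at hsum
    have hterm := (Finset.sum_eq_zero_iff_of_nonpos hnonpos).mp hsum (j, c)
      (Finset.mem_filter.mpr ⟨hjc, rfl⟩)
    rcases mul_eq_zero.mp hterm with h | h
    · exact absurd h (hk _ hjc).ne'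
    · linarith
  have hconst : ∀ w, x w = x v := fun w => by
    induction hsc v w with
    | refl => rfl
    | tail _ hzw ih => exact hstep _ _ hzw ih
  rw [hconst a, hconst b]

theorem ker_digraphLaplacian [Nonempty V] (hloop : NoSelfLoops E) (hk : ∀ e ∈ E, 0 < k e)
    (hsc : StronglyConnected E) :
    LinearMap.ker (digraphLaplacian E k).mulVecLin = Submodule.span ℝ {treeConst E k} := by
  have hle : Submodule.span ℝ {treeConst E k} ≤ LinearMap.ker (digraphLaplacian E k).mulVecLin :=
    Submodule.span_singleton_le_iff_mem _ _ |>.mpr (digraphLaplacian_mulVec_treeConst hloop)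
  have hK : treeConst E k ≠ 0 := fun h =>
    (treeConst_pos hk hsc (Classical.arbitrary V)).ne' (congrFun h _)
  have hkerT : LinearMap.ker (digraphLaplacian E k)ᵀ.mulVecLin ≤ Submodule.span ℝ {1} := by
    intro x hx
    rw [LinearMap.mem_ker, Matrix.mulVecLin_apply, Matrix.mulVec_transpose] at hx
    refine Submodule.mem_span_singleton.mpr ⟨x (Classical.arbitrary V), funext fun w => ?_⟩
    simpa using hsc.eq_of_vecMul_digraphLaplacian_eq_zero hloop hk hx _ w
  refine (Submodule.eq_of_le_of_finrank_le hle ?_).symm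
  rw [finrank_span_singleton hK, ← Matrix.finrank_ker_mulVecLin_transpose]
  exact (Submodule.finrank_mono hkerT).trans (finrank_span_le_card _) |>.trans (by simp)

theorem ker_digraphLaplacian_mul_diagonal_treeConst_le [Nonempty V] (hloop : NoSelfLoops E)
    (hk : ∀ e ∈ E, 0 < k e) (hsc : StronglyConnected E) :
    LinearMap.ker (digraphLaplacian E k * Matrix.diagonal (treeConst E k)).mulVecLin ≤
      Submodule.span ℝ {1} := by
  intro u hu
  rw [LinearMap.mem_ker, Matrix.mulVecLin_apply, ← Matrix.mulVec_mulVec] at hu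
  obtain ⟨c, hc⟩ := Submodule.mem_span_singleton.mp
    ((ker_digraphLaplacian hloop hk hsc).le (show _ ∈ LinearMap.ker _ from hu))
  refine Submodule.mem_span_singleton.mpr ⟨c, funext fun i => ?_⟩
  have hci := congrFun hc i
  rw [Matrix.mulVec_diagonal, Pi.smul_apply, smul_eq_mul, mul_comm] at hci
  simpa using (mul_left_cancel₀ (treeConst_pos hk hsc i).ne' hci)

end Laplacian

section Incidence

variable [DecidableEq V] {F : Finset (V × V)}

theorem incidence_mulVec_single_one (e : {e : V × V // e ∈ F}) :
    incidence F *ᵥ Pi.single e 1 = Pi.single e.1.2 1 - Pi.single e.1.1 1 := by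
  funext i
  simp [incidence, Pi.single_apply, eq_comm]

theorem single_sub_single_mem_range_incidence {a b : V} (h : uReach F a b) :
    Pi.single b 1 - Pi.single a 1 ∈ LinearMap.range (incidence F).mulVecLin := by
  induction h with
  | refl => simp
  | @tail z w _ hzw ih =>
    have hedge : Pi.single w 1 - Pi.single z 1 ∈ LinearMap.range (incidence F).mulVecLin := by
      rcases hzw with hzw | hwz
      · exact ⟨Pi.single ⟨(z, w), hzw⟩ 1, incidence_mulVec_single_one _⟩
      · exact ⟨-Pi.single ⟨(w, z), hwz⟩ 1, by
          rw [Matrix.mulVecLin_apply, Matrix.mulVec_neg, incidence_mulVec_single_one, neg_sub]⟩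
    simpa using add_mem hedge ih

variable [Fintype V]

theorem transpose_incidence_mulVec_apply (x : V → ℝ) (e : {e : V × V // e ∈ F}) :
    ((incidence F)ᵀ *ᵥ x) e = x e.1.2 - x e.1.1 := by
  simp [Matrix.mulVec, dotProduct, incidence, sub_mul, Finset.sum_sub_distrib, ite_mul]

theorem span_one_le_ker_transpose_incidence :
    Submodule.span ℝ {1} ≤ LinearMap.ker (incidence F)ᵀ.mulVecLin := by
  rw [Submodule.span_singleton_le_iff_mem, LinearMap.mem_ker, Matrix.mulVecLin_apply]
  funext e
  simp [transpose_incidence_mulVec_apply]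

theorem mem_range_incidence [Nonempty V] (hconn : ∀ i j, uReach F i j) {x : V → ℝ}
    (hx : ∑ i, x i = 0) : x ∈ LinearMap.range (incidence F).mulVecLin := by
  set a := Classical.arbitrary V
  have hx' : x = ∑ i, x i • (Pi.single i 1 - Pi.single a 1) := by
    rw [Finset.sum_congr rfl fun i _ => smul_sub (x i) _ _, Finset.sum_sub_distrib,
      ← Finset.sum_smul, hx, zero_smul, sub_zero, ← pi_eq_sum_univ' x]
  rw [hx']
  exact Submodule.sum_mem _ fun i _ =>
    Submodule.smul_mem _ _ (single_sub_single_mem_range_incidence (hconn a i))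

theorem range_le_range_incidence [Nonempty V] (hconn : ∀ i j, uReach F i j) {M : Matrix V V ℝ}
    (hM : 1 ᵥ* M = 0) : LinearMap.range M.mulVecLin ≤ LinearMap.range (incidence F).mulVecLin := by
  rintro _ ⟨y, rfl⟩
  refine mem_range_incidence hconn ?_
  rw [← one_dotProduct, Matrix.mulVecLin_apply, dotProduct_mulVec, hM, zero_dotProduct]

theorem IsDirectedTree.injective_incidence_mulVec [Nonempty V] (hF : IsDirectedTree F) :
    Function.Injective (incidence F).mulVec := by
  set φ : (V → ℝ) →ₗ[ℝ] ℝ := ∑ i, LinearMap.proj i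
  have hφ : LinearMap.range φ = ⊤ := LinearMap.range_eq_top.mpr fun r =>
    ⟨Pi.single (Classical.arbitrary V) r, by simp [φ]⟩
  have hkerφ : LinearMap.ker φ ≤ LinearMap.range (incidence F).mulVecLin := fun x hx =>
    mem_range_incidence hF.2 (by simpa [φ] using hx)
  have h₁ := LinearMap.finrank_range_add_finrank_ker φ
  have h₂ := LinearMap.finrank_range_add_finrank_ker (incidence F).mulVecLin
  have h₃ := Submodule.finrank_mono hkerφ
  rw [hφ, finrank_top, Module.finrank_self, Module.finrank_pi] at h₁
  rw [Module.finrank_pi, Fintype.card_coe, hF.1] at h₂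
  have hpos := Fintype.card_pos (α := V)
  have hker : LinearMap.ker (incidence F).mulVecLin = ⊥ :=
    Submodule.finrank_eq_zero.mp (by omega)
  exact LinearMap.ker_eq_bot.mp hker

end Incidence

/-- (Proposition 1) For a strongly connected labeled simple digraph `G_k = (V,E,k)` and an
auxiliary digraph `G_ℰ = (V,ℰ)`, there is a unique matrix `𝒜_{k,ℰ}` (the core matrix) with
`A_k diag(K_k) = -I_ℰ 𝒜_{k,ℰ} I_ℰᵀ`, and this matrix is invertible. -/
theorem core_matrix_exists_unique_invertible
    {V : Type*} [Fintype V] [DecidableEq V]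
    (E : Finset (V × V)) (hloop : NoSelfLoops E)
    (k : V × V → ℝ) (hk : ∀ e ∈ E, 0 < k e)
    (hsc : StronglyConnected E)
    (F : Finset (V × V)) (hF : IsDirectedTree F) :
    (∃! A : Matrix {e : V × V // e ∈ F} {e : V × V // e ∈ F} ℝ,
      digraphLaplacian E k * Matrix.diagonal (treeConst E k) = -(incidence F * A * (incidence F)ᵀ)) ∧
    (∀ A : Matrix {e : V × V // e ∈ F} {e : V × V // e ∈ F} ℝ,
      digraphLaplacian E k * Matrix.diagonal (treeConst E k) = -(incidence F * A * (incidence F)ᵀ) →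
      IsUnit A) := by
  rcases isEmpty_or_nonempty V with hV | hV
  · exact ⟨⟨0, Subsingleton.elim _ _, fun _ _ => Subsingleton.elim _ _⟩,
      fun A _ => isUnit_of_subsingleton A⟩
  simp_rw [← neg_eq_iff_eq_neg]
  set M := -(digraphLaplacian E k * Matrix.diagonal (treeConst E k))
  have hinj := hF.injective_incidence_mulVec
  have hcol : 1 ᵥ* M = 0 := by
    rw [Matrix.vecMul_neg, ← Matrix.vecMul_vecMul, one_vecMul_digraphLaplacian hloop,
      Matrix.zero_vecMul, neg_zero]
  have hrow : 1 ᵥ* Mᵀ = 0 := by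
    have hdiag : Matrix.diagonal (treeConst E k) *ᵥ 1 = treeConst E k := by
      funext i; simp [Matrix.mulVec_diagonal]
    rw [Matrix.vecMul_transpose, Matrix.neg_mulVec, ← Matrix.mulVec_mulVec, hdiag,
      digraphLaplacian_mulVec_treeConst hloop, neg_zero]
  have hker : LinearMap.ker M.mulVecLin ≤ LinearMap.ker (incidence F)ᵀ.mulVecLin := fun x hx =>
    span_one_le_ker_transpose_incidence <|
      ker_digraphLaplacian_mul_diagonal_treeConst_le hloop hk hsc
        (by simpa [M, Matrix.neg_mulVec] using hx)
  exact ⟨Matrix.existsUnique_eq_mul_mul_transpose hinj (range_le_range_incidence hF.2 hcol)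
    (range_le_range_incidence hF.2 hrow), fun _ => Matrix.isUnit_of_eq_mul_mul_transpose hinj hker⟩
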